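/- Let M be a ⊗-quasi-crystal monoid whose underlying monoid is equidivisible, and let x, y, x', y' ∈ M be such that xy = x'y'. For i ∈ I, if φ̈_i(x) > 0 and ε̈_i(y) > 0, then one of the following holds: (1) x' = x'₁x'₂ for some x'₁, x'₂ ∈ M with φ̈_i(x'₁) > 0 and ε̈_i(x'₂) > 0; (2) y' = y'₁y'₂ for some y'₁, y'₂ ∈ M with φ̈_i(y'₁) > 0 and ε̈_i(y'₂) > 0; or (3) φ̈_i(x') > 0 and ε̈_i(y') > 0. -/

import Mathlib

/-! ## Root system setting -/

/-- The data of a root system `Φ` in a Euclidean space `V`, together with a choice of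
simple roots `(α_i)_{i ∈ ι}` and a weight lattice `Λ`, with the integer-valued coroot
pairing `pair λ i = ⟨λ, α_i^∨⟩ = 2⟪λ, α_i⟫/⟪α_i, α_i⟫` on the weight lattice. -/
structure QCSetting (V : Type*) [NormedAddCommGroup V] [InnerProductSpace ℝ V]
    (ι : Type*) where
  Φ : Set V
  finite : Φ.Finite
  nonempty : Φ.Nonempty
  zero_not_mem : (0 : V) ∉ Φ
  reflect_mem : ∀ a ∈ Φ, ∀ b ∈ Φ, b - (2 * (inner ℝ b a : ℝ) / (inner ℝ a a : ℝ)) • a ∈ Φ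
  smul_root : ∀ a ∈ Φ, ∀ k : ℝ, k • a ∈ Φ → k = 1 ∨ k = -1
  simple : ι → V
  simple_mem : ∀ i, simple i ∈ Φ
  simple_indep : LinearIndependent ℝ simple
  Λ : AddSubgroup V
  lattice_spans : Submodule.span ℝ (Λ : Set V) = ⊤
  root_mem_lattice : ∀ a ∈ Φ, a ∈ Λ
  pair : Λ → ι → ℤ
  pair_spec : ∀ (v : Λ) (i : ι),
    (pair v i : ℝ) = 2 * (inner ℝ (v : V) (simple i) : ℝ) / (inner ℝ (simple i) (simple i) : ℝ)

variable {V : Type*} [NormedAddCommGroup V] [InnerProductSpace ℝ V] {ι : Type*}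

/-! ## Quasi-crystals -/

/-- The structure maps of a quasi-crystal of type `S` on an underlying set `Q`:
a weight map `wt` with values in the weight lattice, partial quasi-Kashiwara operators
`e i, f i : Q → Q ⊔ {⊥}` (realized as `Option`-valued maps, `none` playing the role
of `⊥`), and maps `ε i, φ i : Q → ℤ ∪ {+∞}` (realized as `WithTop ℤ`). -/
structure QC (S : QCSetting V ι) (Q : Type*) where
  wt : Q → S.Λ
  e : ι → Q → Option Q
  f : ι → Q → Option Q
  ε : ι → Q → WithTop ℤ
  φ : ι → Q → WithTop ℤ

/-- `k`-fold iteration of a partial map `g : Q → Option Q` starting at `x`. -/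
def optIter {Q : Type*} (g : Q → Option Q) (k : ℕ) (x : Q) : Option Q :=
  (fun o => o.bind g)^[k] (some x)

/-- The axioms of a seminormal quasi-crystal. -/
structure QC.IsSeminormal {S : QCSetting V ι} {Q : Type*} (𝒬 : QC S Q) : Prop where
  phi_eq : ∀ i x, 𝒬.φ i x = 𝒬.ε i x + ((S.pair (𝒬.wt x) i : ℤ) : WithTop ℤ)
  wt_e : ∀ i x y, 𝒬.e i x = some y → (𝒬.wt y : V) = (𝒬.wt x : V) + S.simple i
  wt_f : ∀ i x y, 𝒬.f i x = some y → (𝒬.wt y : V) = (𝒬.wt x : V) - S.simple i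
  e_iff_f : ∀ i x y, 𝒬.e i x = some y ↔ 𝒬.f i y = some x
  e_of_top : ∀ i x, 𝒬.ε i x = ⊤ → 𝒬.e i x = none
  f_of_top : ∀ i x, 𝒬.ε i x = ⊤ → 𝒬.f i x = none
  eps_spec : ∀ i x, 𝒬.ε i x ≠ ⊤ → ∃ n : ℕ, 𝒬.ε i x = ((n : ℤ) : WithTop ℤ) ∧
    IsGreatest {k : ℕ | (optIter (𝒬.e i) k x).isSome} n
  phi_spec : ∀ i x, 𝒬.ε i x ≠ ⊤ → ∃ n : ℕ, 𝒬.φ i x = ((n : ℤ) : WithTop ℤ) ∧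
    IsGreatest {k : ℕ | (optIter (𝒬.f i) k x).isSome} n

/-- A seminormal crystal is a seminormal quasi-crystal in which `ε i x ≠ +∞` always. -/
def QC.IsSeminormalCrystal {S : QCSetting V ι} {Q : Type*} (𝒬 : QC S Q) : Prop :=
  𝒬.IsSeminormal ∧ ∀ i x, 𝒬.ε i x ≠ ⊤

/-! ## Tensor product -/

/-- The tensor product of two quasi-crystals of the same type. -/
noncomputable def QC.tensor {S : QCSetting V ι} {Q Q' : Type*} (𝒬 : QC S Q) (𝒬' : QC S Q') :
    QC S (Q × Q') where
  wt p := 𝒬.wt p.1 + 𝒬'.wt p.2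
  ε i p := max (𝒬.ε i p.1) (𝒬'.ε i p.2 + ((-(S.pair (𝒬.wt p.1) i) : ℤ) : WithTop ℤ))
  φ i p := max (𝒬.φ i p.1 + ((S.pair (𝒬'.wt p.2) i : ℤ) : WithTop ℤ)) (𝒬'.φ i p.2)
  e i p := if 𝒬'.ε i p.2 ≤ 𝒬.φ i p.1
    then (𝒬.e i p.1).map (fun y => (y, p.2))
    else (𝒬'.e i p.2).map (fun y => (p.1, y))
  f i p := if 𝒬'.ε i p.2 < 𝒬.φ i p.1
    then (𝒬.f i p.1).map (fun y => (y, p.2))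
    else (𝒬'.f i p.2).map (fun y => (p.1, y))

/-! ## Quasi-tensor product -/

/-- The (inverse-free) quasi-tensor product of two quasi-crystals of the same type. -/
noncomputable def QC.qtensor {S : QCSetting V ι} {Q Q' : Type*} (𝒬 : QC S Q) (𝒬' : QC S Q') :
    QC S (Q × Q') where
  wt p := 𝒬.wt p.1 + 𝒬'.wt p.2
  ε i p := if 0 < 𝒬.φ i p.1 ∧ 0 < 𝒬'.ε i p.2 then ⊤
    else max (𝒬.ε i p.1) (𝒬'.ε i p.2 + ((-(S.pair (𝒬.wt p.1) i) : ℤ) : WithTop ℤ))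
  φ i p := if 0 < 𝒬.φ i p.1 ∧ 0 < 𝒬'.ε i p.2 then ⊤
    else max (𝒬.φ i p.1 + ((S.pair (𝒬'.wt p.2) i : ℤ) : WithTop ℤ)) (𝒬'.φ i p.2)
  e i p := if 0 < 𝒬.φ i p.1 ∧ 0 < 𝒬'.ε i p.2 then none
    else if 𝒬'.ε i p.2 ≤ 𝒬.φ i p.1 then (𝒬.e i p.1).map (fun y => (y, p.2))
    else (𝒬'.e i p.2).map (fun y => (p.1, y))
  f i p := if 0 < 𝒬.φ i p.1 ∧ 0 < 𝒬'.ε i p.2 then none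
    else if 𝒬'.ε i p.2 < 𝒬.φ i p.1 then (𝒬.f i p.1).map (fun y => (y, p.2))
    else (𝒬'.f i p.2).map (fun y => (p.1, y))

/-! ## Homomorphisms -/

/-- A quasi-crystal homomorphism `ψ : 𝒬 → 𝒬'`, i.e. a map `Q ⊔ {⊥} → Q' ⊔ {⊥}`
(realized on `Option`s, `none` playing the role of `⊥`) compatible with the structure
maps in the appropriate sense. -/
structure QCHom {S : QCSetting V ι} {Q Q' : Type*} (𝒬 : QC S Q) (𝒬' : QC S Q') where
  toFun : Option Q → Option Q'
  map_none : toFun none = none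
  wt_eq : ∀ x y, toFun (some x) = some y → 𝒬'.wt y = 𝒬.wt x
  eps_eq : ∀ i x y, toFun (some x) = some y → 𝒬'.ε i y = 𝒬.ε i x
  phi_eq : ∀ i x y, toFun (some x) = some y → 𝒬'.φ i y = 𝒬.φ i x
  comm_e : ∀ i x x' y y', 𝒬.e i x = some x' → toFun (some x) = some y →
    toFun (some x') = some y' → 𝒬'.e i y = some y'
  comm_f : ∀ i x x' y y', 𝒬.f i x = some x' → toFun (some x) = some y →
    toFun (some x') = some y' → 𝒬'.f i y = some y'

/-! ## The free `⊗`-quasi-crystal monoid -/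

/-- Weight of a word: the sum of the weights of its letters. -/
def freeWt {S : QCSetting V ι} {Q : Type*} (𝒬 : QC S Q) : List Q → S.Λ
  | [] => 0
  | x :: w => 𝒬.wt x + freeWt 𝒬 w

/-- The map `ε̈_i` of the free `⊗`-quasi-crystal monoid. -/
def freeEps {S : QCSetting V ι} {Q : Type*} (𝒬 : QC S Q) (i : ι) : List Q → WithTop ℤ
  | [] => 0
  | x :: w => max (𝒬.ε i x) (freeEps 𝒬 i w + ((-(S.pair (𝒬.wt x) i) : ℤ) : WithTop ℤ))

/-- The map `φ̈_i` of the free `⊗`-quasi-crystal monoid. -/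
def freePhi {S : QCSetting V ι} {Q : Type*} (𝒬 : QC S Q) (i : ι) : List Q → WithTop ℤ
  | [] => 0
  | x :: w => max (𝒬.φ i x + ((S.pair (freeWt 𝒬 w) i : ℤ) : WithTop ℤ)) (freePhi 𝒬 i w)

/-- The operator `ë_i` of the free `⊗`-quasi-crystal monoid. -/
noncomputable def freeE {S : QCSetting V ι} {Q : Type*} (𝒬 : QC S Q) (i : ι) : List Q → Option (List Q)
  | [] => none
  | x :: w => if freeEps 𝒬 i w ≤ 𝒬.φ i x
      then (𝒬.e i x).map (· :: w)
      else (freeE 𝒬 i w).map (x :: ·)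

/-- The operator `f̈_i` of the free `⊗`-quasi-crystal monoid. -/
noncomputable def freeF {S : QCSetting V ι} {Q : Type*} (𝒬 : QC S Q) (i : ι) : List Q → Option (List Q)
  | [] => none
  | x :: w => if freeEps 𝒬 i w < 𝒬.φ i x
      then (𝒬.f i x).map (· :: w)
      else (freeF 𝒬 i w).map (x :: ·)

/-- The quasi-crystal structure of the free `⊗`-quasi-crystal monoid `F^⊗(𝒬)`
on the free monoid `Q*`. -/
noncomputable def freeTensorQC {S : QCSetting V ι} {Q : Type*} (𝒬 : QC S Q) : QC S (FreeMonoid Q) where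
  wt w := freeWt 𝒬 (FreeMonoid.toList w)
  ε i w := freeEps 𝒬 i (FreeMonoid.toList w)
  φ i w := freePhi 𝒬 i (FreeMonoid.toList w)
  e i w := (freeE 𝒬 i (FreeMonoid.toList w)).map (fun l => FreeMonoid.ofList l)
  f i w := (freeF 𝒬 i (FreeMonoid.toList w)).map (fun l => FreeMonoid.ofList l)

/-! ## The free `⊗̈`-quasi-crystal monoid -/

/-- The map `ε̈_i` of the free `⊗̈`-quasi-crystal monoid. -/
noncomputable def qfreeEps {S : QCSetting V ι} {Q : Type*} (𝒬 : QC S Q) (i : ι) : List Q → WithTop ℤ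
  | [] => 0
  | x :: w => if 0 < 𝒬.φ i x ∧ 0 < qfreeEps 𝒬 i w then ⊤
      else max (𝒬.ε i x) (qfreeEps 𝒬 i w + ((-(S.pair (𝒬.wt x) i) : ℤ) : WithTop ℤ))

/-- The map `φ̈_i` of the free `⊗̈`-quasi-crystal monoid. -/
noncomputable def qfreePhi {S : QCSetting V ι} {Q : Type*} (𝒬 : QC S Q) (i : ι) : List Q → WithTop ℤ
  | [] => 0
  | x :: w => if 0 < 𝒬.φ i x ∧ 0 < qfreeEps 𝒬 i w then ⊤
      else max (𝒬.φ i x + ((S.pair (freeWt 𝒬 w) i : ℤ) : WithTop ℤ)) (qfreePhi 𝒬 i w)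

/-- The operator `ë_i` of the free `⊗̈`-quasi-crystal monoid. -/
noncomputable def qfreeE {S : QCSetting V ι} {Q : Type*} (𝒬 : QC S Q) (i : ι) : List Q → Option (List Q)
  | [] => none
  | x :: w => if 0 < 𝒬.φ i x ∧ 0 < qfreeEps 𝒬 i w then none
      else if qfreeEps 𝒬 i w ≤ 𝒬.φ i x then (𝒬.e i x).map (· :: w)
      else (qfreeE 𝒬 i w).map (x :: ·)

/-- The operator `f̈_i` of the free `⊗̈`-quasi-crystal monoid. -/
noncomputable def qfreeF {S : QCSetting V ι} {Q : Type*} (𝒬 : QC S Q) (i : ι) : List Q → Option (List Q)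
  | [] => none
  | x :: w => if 0 < 𝒬.φ i x ∧ 0 < qfreeEps 𝒬 i w then none
      else if qfreeEps 𝒬 i w < 𝒬.φ i x then (𝒬.f i x).map (· :: w)
      else (qfreeF 𝒬 i w).map (x :: ·)

/-- The quasi-crystal structure of the free `⊗̈`-quasi-crystal monoid `F^⊗̈(𝒬)`
on the free monoid `Q*`. -/
noncomputable def freeQTensorQC {S : QCSetting V ι} {Q : Type*} (𝒬 : QC S Q) : QC S (FreeMonoid Q) where
  wt w := freeWt 𝒬 (FreeMonoid.toList w)
  ε i w := qfreeEps 𝒬 i (FreeMonoid.toList w)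
  φ i w := qfreePhi 𝒬 i (FreeMonoid.toList w)
  e i w := (qfreeE 𝒬 i (FreeMonoid.toList w)).map (fun l => FreeMonoid.ofList l)
  f i w := (qfreeF 𝒬 i (FreeMonoid.toList w)).map (fun l => FreeMonoid.ofList l)

/-! ## Connected components, plactic and hypoplactic congruences -/

/-- Two elements are connected in the quasi-crystal graph if they are related by the
reflexive-symmetric-transitive closure of the edge relation given by the
quasi-Kashiwara operators. -/
def QC.conn {S : QCSetting V ι} {Q : Type*} (𝒬 : QC S Q) : Q → Q → Prop :=
  Relation.EqvGen (fun x y => ∃ i, 𝒬.f i x = some y ∨ 𝒬.f i y = some x ∨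
    𝒬.e i x = some y ∨ 𝒬.e i y = some x)

/-- The connected component `𝒬(x)` of a quasi-crystal `𝒬` containing `x`, as a
quasi-crystal on the subtype of elements connected with `x`. -/
def QC.compQC {S : QCSetting V ι} {Q : Type*} (𝒬 : QC S Q) (x : Q) :
    QC S {y : Q // 𝒬.conn x y} where
  wt y := 𝒬.wt y.1
  ε i y := 𝒬.ε i y.1
  φ i y := 𝒬.φ i y.1
  e i y := (𝒬.e i y.1).pmap (fun z hz => (⟨z, hz⟩ : {y : Q // 𝒬.conn x y}))
    (fun z hz => Relation.EqvGen.trans _ _ _ y.2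
      (Relation.EqvGen.rel _ _ ⟨i, Or.inr (Or.inr (Or.inl hz))⟩))
  f i y := (𝒬.f i y.1).pmap (fun z hz => (⟨z, hz⟩ : {y : Q // 𝒬.conn x y}))
    (fun z hz => Relation.EqvGen.trans _ _ _ y.2
      (Relation.EqvGen.rel _ _ ⟨i, Or.inl hz⟩))

/-- The plactic congruence: `u ≈ v` iff there is a quasi-crystal isomorphism between the
connected components of `u` and `v` in `F^⊗(𝒬)` mapping `u` to `v`. -/
def placticRel {S : QCSetting V ι} {Q : Type*} (𝒬 : QC S Q)
    (u v : FreeMonoid Q) : Prop :=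
  ∃ ψ : QCHom ((freeTensorQC 𝒬).compQC u) ((freeTensorQC 𝒬).compQC v),
    Function.Bijective ψ.toFun ∧
    ψ.toFun (some ⟨u, Relation.EqvGen.refl u⟩) = some ⟨v, Relation.EqvGen.refl v⟩

/-- The hypoplactic congruence: `u ∼̈ v` iff there is a quasi-crystal isomorphism between
the connected components of `u` and `v` in `F^⊗̈(𝒬)` mapping `u` to `v`. -/
def hypoRel {S : QCSetting V ι} {Q : Type*} (𝒬 : QC S Q)
    (u v : FreeMonoid Q) : Prop :=
  ∃ ψ : QCHom ((freeQTensorQC 𝒬).compQC u) ((freeQTensorQC 𝒬).compQC v),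
    Function.Bijective ψ.toFun ∧
    ψ.toFun (some ⟨u, Relation.EqvGen.refl u⟩) = some ⟨v, Relation.EqvGen.refl v⟩

/-! ## Quasi-crystal monoids -/

/-- A monoid is equidivisible if whenever `x₁y₁ = x₂y₂` one of the factorizations
refines the other. -/
def Equidivisible (M : Type*) [Monoid M] : Prop :=
  ∀ x₁ x₂ y₁ y₂ : M, x₁ * y₁ = x₂ * y₂ →
    ∃ z : M, (x₂ = x₁ * z ∧ y₁ = z * y₂) ∨ (x₁ = x₂ * z ∧ y₂ = z * y₁)

/-- A `⊗`-quasi-crystal monoid: a seminormal quasi-crystal structure on a monoid whose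
structure maps interact with the multiplication by the tensor-product rules. -/
structure IsTensorQCMon {S : QCSetting V ι} {M : Type*} [Monoid M] (𝒬 : QC S M) : Prop where
  seminormal : 𝒬.IsSeminormal
  wt_mul : ∀ x y, 𝒬.wt (x * y) = 𝒬.wt x + 𝒬.wt y
  eps_mul : ∀ i x y, 𝒬.ε i (x * y) =
    max (𝒬.ε i x) (𝒬.ε i y + ((-(S.pair (𝒬.wt x) i) : ℤ) : WithTop ℤ))
  phi_mul : ∀ i x y, 𝒬.φ i (x * y) =
    max (𝒬.φ i x + ((S.pair (𝒬.wt y) i : ℤ) : WithTop ℤ)) (𝒬.φ i y)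
  e_mul : ∀ i x y, 𝒬.e i (x * y) =
    if 𝒬.ε i y ≤ 𝒬.φ i x then (𝒬.e i x).map (· * y) else (𝒬.e i y).map (x * ·)
  f_mul : ∀ i x y, 𝒬.f i (x * y) =
    if 𝒬.ε i y < 𝒬.φ i x then (𝒬.f i x).map (· * y) else (𝒬.f i y).map (x * ·)

/-- A `⊗̈`-quasi-crystal monoid: a seminormal quasi-crystal structure on a monoid such
that `x ⊗̈ y ↦ x·y` induces a quasi-crystal homomorphism `M ⊗̈ M → M`. -/
def IsQTensorQCMon {S : QCSetting V ι} {M : Type*} [Monoid M] (𝒬 : QC S M) : Prop :=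
  𝒬.IsSeminormal ∧
  ∃ ψ : QCHom (𝒬.qtensor 𝒬) 𝒬, ψ.toFun = Option.map (fun p => p.1 * p.2)

/-! ## The bicyclic monoid with zero `B₀` and the monoid `Z₀` -/

/-- The bicyclic monoid `⟨−, + | (+)(−) = ε⟩`: elements are normal forms `(−)^a(+)^b`. -/
structure Bic where
  neg : ℕ
  pos : ℕ
deriving DecidableEq

instance : Mul Bic :=
  ⟨fun x y => ⟨x.neg + (y.neg - x.pos), y.pos + (x.pos - y.neg)⟩⟩

theorem Bic.mul_def (x y : Bic) :
    x * y = ⟨x.neg + (y.neg - x.pos), y.pos + (x.pos - y.neg)⟩ := rfl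

instance : One Bic := ⟨⟨0, 0⟩⟩

theorem Bic.one_def : (1 : Bic) = ⟨0, 0⟩ := rfl

instance : Monoid Bic where
  mul_assoc x y z := by
    simp only [Bic.mul_def, Bic.mk.injEq]
    omega
  one_mul x := by
    simp only [Bic.one_def, Bic.mul_def]
    cases x
    simp only [Bic.mk.injEq]
    omega
  mul_one x := by
    simp only [Bic.one_def, Bic.mul_def]
    cases x
    simp only [Bic.mk.injEq]
    omega

/-- The bicyclic monoid with a zero element adjoined,
`B₀ = ⟨0, −, + | (+)(−) = ε, 0x = x0 = 0⟩`. -/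
abbrev B0 : Type := WithZero Bic

/-- The monoid `Z₀ = ⟨0, −, + | (+)(−) = 0, 0x = x0 = 0⟩`: the nonzero elements are the
normal forms `(−)^a(+)^b`. -/
inductive Z0 : Type
  | zero : Z0
  | word : ℕ → ℕ → Z0
deriving DecidableEq

instance : Mul Z0 :=
  ⟨fun x y => match x, y with
    | Z0.zero, _ => Z0.zero
    | _, Z0.zero => Z0.zero
    | Z0.word a b, Z0.word c d =>
        if 0 < b ∧ 0 < c then Z0.zero else Z0.word (a + c) (b + d)⟩

instance : One Z0 := ⟨Z0.word 0 0⟩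

instance : Zero Z0 := ⟨Z0.zero⟩

theorem Z0.one_def : (1 : Z0) = Z0.word 0 0 := rfl
theorem Z0.zero_def : (0 : Z0) = Z0.zero := rfl
theorem Z0.zero_mul' (x : Z0) : Z0.zero * x = Z0.zero := by cases x <;> rfl
theorem Z0.mul_zero' (x : Z0) : x * Z0.zero = Z0.zero := by cases x <;> rfl
theorem Z0.word_mul_word (a b c d : ℕ) :
    Z0.word a b * Z0.word c d =
      if 0 < b ∧ 0 < c then Z0.zero else Z0.word (a + c) (b + d) := rfl

instance : MonoidWithZero Z0 where
  mul_assoc x y z := by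
    cases x <;> cases y <;> cases z <;>
      simp only [Z0.zero_mul', Z0.mul_zero', Z0.word_mul_word]
    · split_ifs <;> simp_all [Z0.zero_mul', Z0.mul_zero', Z0.word_mul_word] <;>
        split_ifs <;> simp_all <;> omega
  one_mul x := by
    cases x
    · rfl
    · simp [Z0.one_def, Z0.word_mul_word]
  mul_one x := by
    cases x
    · rfl
    · simp [Z0.one_def, Z0.word_mul_word]
  zero_mul x := by cases x <;> rfl
  mul_zero x := by cases x <;> rfl

/-! ## Signature maps -/

/-- The `i`-signature map for the tensor product `⊗`:
`sgn_i^⊗(w) = 0` if `ε̈_i(w) = +∞`, and `(−)^{ε̈_i(w)}(+)^{φ̈_i(w)}` otherwise. -/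
noncomputable def tsgn {V : Type*} [NormedAddCommGroup V] [InnerProductSpace ℝ V] {ι : Type*}
    {S : QCSetting V ι} {Q : Type*} (𝒬 : QC S Q) (i : ι) (w : FreeMonoid Q) : B0 :=
  if freeEps 𝒬 i (FreeMonoid.toList w) = ⊤ then 0
  else ↑(Bic.mk (WithTop.untopD 0 (freeEps 𝒬 i (FreeMonoid.toList w))).toNat
      (WithTop.untopD 0 (freePhi 𝒬 i (FreeMonoid.toList w))).toNat)

/-- The `i`-signature map for the quasi-tensor product `⊗̈`:
`sgn_i^⊗̈(w) = 0` if `ε̈_i(w) = +∞`, and `(−)^{ε̈_i(w)}(+)^{φ̈_i(w)}` otherwise. -/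
noncomputable def qsgn {V : Type*} [NormedAddCommGroup V] [InnerProductSpace ℝ V] {ι : Type*}
    {S : QCSetting V ι} {Q : Type*} (𝒬 : QC S Q) (i : ι) (w : FreeMonoid Q) : Z0 :=
  if qfreeEps 𝒬 i (FreeMonoid.toList w) = ⊤ then 0
  else Z0.word (WithTop.untopD 0 (qfreeEps 𝒬 i (FreeMonoid.toList w))).toNat
      (WithTop.untopD 0 (qfreePhi 𝒬 i (FreeMonoid.toList w))).toNat

/-! Equidivisibility gives `z` with `x' = xz, y = zy'` or `x = x'z, y' = zy`. Unless
`ε̈_i(z) > 0` (resp. `φ̈_i(z) > 0`), which splits `x'` (resp. `y'`), we have `ε̈_i(z) = 0`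
(resp. `φ̈_i(z) = 0`). Then `φ̈_i = ε̈_i + ⟨wt, α_i^∨⟩` fixes the sign of `⟨wt(z), α_i^∨⟩`, and
by the tensor-product rules multiplying by `z` moves `φ̈_i` and `ε̈_i` only in the direction
that keeps `φ̈_i(x') > 0` and `ε̈_i(y') > 0`. -/

namespace QC.IsSeminormal

variable {S : QCSetting V ι} {Q : Type*} {𝒬 : QC S Q}

theorem eps_nonneg (h : 𝒬.IsSeminormal) (i : ι) (x : Q) : 0 ≤ 𝒬.ε i x := by
  rcases eq_or_ne (𝒬.ε i x) ⊤ with htop | htop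
  · simp [htop]
  · obtain ⟨n, hn, -⟩ := h.eps_spec i x htop
    rw [hn]
    exact_mod_cast n.cast_nonneg

theorem phi_nonneg (h : 𝒬.IsSeminormal) (i : ι) (x : Q) : 0 ≤ 𝒬.φ i x := by
  rcases eq_or_ne (𝒬.ε i x) ⊤ with htop | htop
  · simp [h.phi_eq, htop]
  · obtain ⟨n, hn, -⟩ := h.phi_spec i x htop
    rw [hn]
    exact_mod_cast n.cast_nonneg

theorem pair_nonneg_of_eps_eq_zero (h : 𝒬.IsSeminormal) {i : ι} {x : Q}
    (hx : 𝒬.ε i x = 0) : 0 ≤ S.pair (𝒬.wt x) i := by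
  have := h.phi_nonneg i x
  rwa [h.phi_eq, hx, zero_add, WithTop.coe_nonneg] at this

theorem pair_nonpos_of_phi_eq_zero (h : 𝒬.IsSeminormal) {i : ι} {x : Q}
    (hx : 𝒬.φ i x = 0) : S.pair (𝒬.wt x) i ≤ 0 := by
  have hle : ((S.pair (𝒬.wt x) i : ℤ) : WithTop ℤ) ≤ 𝒬.ε i x + (S.pair (𝒬.wt x) i : ℤ) :=
    le_add_of_nonneg_left (h.eps_nonneg i x)
  rw [← h.phi_eq, hx] at hle
  exact_mod_cast hle

end QC.IsSeminormal

namespace IsTensorQCMon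

variable {S : QCSetting V ι} {M : Type*} [Monoid M] {𝒬 : QC S M}

theorem phi_le_phi_mul_of_eps_eq_zero (hM : IsTensorQCMon 𝒬) {i : ι} {z : M}
    (hz : 𝒬.ε i z = 0) (x : M) : 𝒬.φ i x ≤ 𝒬.φ i (x * z) := by
  rw [hM.phi_mul]
  refine le_max_of_le_left (le_add_of_nonneg_right ?_)
  exact_mod_cast hM.seminormal.pair_nonneg_of_eps_eq_zero hz

theorem eps_mul_le_of_eps_eq_zero (hM : IsTensorQCMon 𝒬) {i : ι} {z : M}
    (hz : 𝒬.ε i z = 0) (y : M) : 𝒬.ε i (z * y) ≤ 𝒬.ε i y := by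
  rw [hM.eps_mul, hz]
  refine max_le (hM.seminormal.eps_nonneg i y) (add_le_of_nonpos_right ?_)
  exact_mod_cast neg_nonpos.mpr (hM.seminormal.pair_nonneg_of_eps_eq_zero hz)

theorem phi_mul_le_of_phi_eq_zero (hM : IsTensorQCMon 𝒬) {i : ι} {z : M}
    (hz : 𝒬.φ i z = 0) (x : M) : 𝒬.φ i (x * z) ≤ 𝒬.φ i x := by
  rw [hM.phi_mul, hz]
  refine max_le (add_le_of_nonpos_right ?_) (hM.seminormal.phi_nonneg i x)
  exact_mod_cast hM.seminormal.pair_nonpos_of_phi_eq_zero hz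

theorem eps_le_eps_mul_of_phi_eq_zero (hM : IsTensorQCMon 𝒬) {i : ι} {z : M}
    (hz : 𝒬.φ i z = 0) (y : M) : 𝒬.ε i y ≤ 𝒬.ε i (z * y) := by
  rw [hM.eps_mul]
  refine le_max_of_le_right (le_add_of_nonneg_right ?_)
  exact_mod_cast neg_nonneg.mpr (hM.seminormal.pair_nonpos_of_phi_eq_zero hz)

end IsTensorQCMon

/-- In an equidivisible `⊗`-quasi-crystal monoid, if `xy = x'y'`,
`φ̈_i(x) > 0` and `ε̈_i(y) > 0`, then either `x'` decomposes as `x'₁x'₂` with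
`φ̈_i(x'₁) > 0` and `ε̈_i(x'₂) > 0`, or `y'` decomposes likewise, or `φ̈_i(x') > 0` and
`ε̈_i(y') > 0`. -/
theorem tensorMon_equidiv_decomp {V : Type*} [NormedAddCommGroup V]
    [InnerProductSpace ℝ V] {ι : Type*} {S : QCSetting V ι} {M : Type*} [Monoid M]
    (𝒬 : QC S M) (hM : IsTensorQCMon 𝒬) (heq : Equidivisible M)
    (x y x' y' : M) (hxy : x * y = x' * y') (i : ι)
    (hx : 0 < 𝒬.φ i x) (hy : 0 < 𝒬.ε i y) :
    (∃ a b : M, x' = a * b ∧ 0 < 𝒬.φ i a ∧ 0 < 𝒬.ε i b) ∨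
    (∃ a b : M, y' = a * b ∧ 0 < 𝒬.φ i a ∧ 0 < 𝒬.ε i b) ∨
    (0 < 𝒬.φ i x' ∧ 0 < 𝒬.ε i y') := by
  obtain ⟨z, ⟨rfl, rfl⟩ | ⟨rfl, rfl⟩⟩ := heq x x' y y' hxy
  · rcases (hM.seminormal.eps_nonneg i z).lt_or_eq with hz | hz
    · exact Or.inl ⟨x, z, rfl, hx, hz⟩
    · exact Or.inr <| Or.inr ⟨hx.trans_le (hM.phi_le_phi_mul_of_eps_eq_zero hz.symm x),
        hy.trans_le (hM.eps_mul_le_of_eps_eq_zero hz.symm y')⟩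
  · rcases (hM.seminormal.phi_nonneg i z).lt_or_eq with hz | hz
    · exact Or.inr <| Or.inl ⟨z, y, rfl, hz, hy⟩
    · exact Or.inr <| Or.inr ⟨hx.trans_le (hM.phi_mul_le_of_phi_eq_zero hz.symm x'),
        hy.trans_le (hM.eps_le_eps_mul_of_phi_eq_zero hz.symm y)⟩
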